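/- arXiv:2604.23302 — 2 statements merged into one kernel-verified Lean document; each statement's English description precedes it below -/
import Mathlib

section
/- Let (G,m,w) be a weighted locally finite graph and Γ a subgroup of Aut(G,m,w) acting freely on V(G), with quotient weighted graph Q = G/Γ (vertex measure m_Q([x]) = m(x), edge weight w_Q([x],[y]) = ∑_{g∈Γ} w(x, g·y)). Then for all vertices x,y and all n ≥ 1, the n-step transition functions satisfy p_n^Q([x],[y]) = ∑_{g ∈ Γ} p_n^G(x, g·y), and the heat kernels satisfy q_n^Q([x],[y]) = ∑_{g ∈ Γ} q_n^G(x, g·y). -/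
/-!
Because the action is free, `(c, g) ↦ g • c.out` identifies `V` with `V/Γ × Γ`, so a finitely
supported sum over `V` splits into a sum over orbits of sums over `Γ`. Applied to the degree
`∑ᵤ w(x, u)`, this shows that the one-step transition function of the quotient is the
periodization `p₁^Q([x], [y]) = ∑_g p₁(x, g • y)`. Applied to one step
`p_{n+1}(x, y) = ∑_z p₁(x, z) p_n(z, y)` of the convolution, it shows that periodization commutes
with convolution, so induction on `n` gives the identity for `p_n`; the one for `q_n` follows
since `m(g • y) = m(y)`.
-/

open Function MulAction

structure IsKernelPow {α R : Type*} [Semiring R] [DecidableEq α] (K : α → α → R)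
    (p : ℕ → α → α → R) : Prop where
  zero : ∀ x y, p 0 x y = if x = y then 1 else 0
  succ : ∀ n x y, p (n + 1) x y = ∑ᶠ z, K x z * p n z y

theorem IsKernelPow.hasFiniteSupport {α R : Type*} [Semiring R] [DecidableEq α]
    {K : α → α → R} {p : ℕ → α → α → R} (hp : IsKernelPow K p)
    (hK : ∀ x, (K x).HasFiniteSupport) (n : ℕ) (x : α) : (p n x).HasFiniteSupport := by
  induction n generalizing x with
  | zero =>
    refine (Set.finite_singleton x).subset fun y hy => ?_
    by_contra hxy
    exact hy ((hp.zero x y).trans (if_neg (Ne.symm hxy)))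
  | succ n ih =>
    refine ((hK x).biUnion fun z _ => ih z).subset fun y hy => ?_
    by_contra hcon
    simp only [Set.mem_iUnion, mem_support, not_exists, not_not] at hcon
    refine hy ((hp.succ n x y).trans (finsum_eq_zero_of_forall_eq_zero fun z => ?_))
    by_cases hz : K x z = 0
    · rw [hz, zero_mul]
    · rw [hcon z hz, mul_zero]

/-- The one-step transition function `p₁` of the weighted graph `(m, w)`. -/
noncomputable def transitionKernel {α R : Type*} [DivisionRing R] [DecidableEq α] (m : α → R)
    (w : α → α → R) (x z : α) : R :=
  (1 - (1 / m x) * ∑ᶠ u, w x u) * (if x = z then 1 else 0) + w x z / m x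

theorem hasFiniteSupport_transitionKernel {α R : Type*} [DivisionRing R] [DecidableEq α]
    {m : α → R} {w : α → α → R} (hw : ∀ x, (w x).HasFiniteSupport) (x : α) :
    (transitionKernel m w x).HasFiniteSupport := by
  refine ((hw x).insert x).subset fun z hz => ?_
  by_contra hcon
  simp only [Set.mem_insert_iff, mem_support, not_or, not_not] at hcon
  exact hz (by simp [transitionKernel, Ne.symm hcon.1, hcon.2])

section FreeAction

variable {G V : Type*} [Group G] [MulAction G V] [IsCancelSMul G V]

theorem IsCancelSMul.smul_left_injective (b : V) : Injective (· • b : G → V) :=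
  fun _ _ h => IsCancelSMul.right_cancel _ _ _ h

theorem Function.HasFiniteSupport.comp_smul_left {M : Type*} [Zero M] {f : V → M}
    (hf : f.HasFiniteSupport) (b : V) : (fun g : G => f (g • b)).HasFiniteSupport :=
  hf.fun_comp_of_injective (IsCancelSMul.smul_left_injective b)

theorem finsum_ite_smul_eq [DecidableEq V] [DecidableEq (orbitRel.Quotient G V)]
    {M : Type*} [AddCommMonoid M] (a b : V) (r : M) :
    ∑ᶠ g : G, (if a = g • b then r else 0) =
      if (Quotient.mk _ a : orbitRel.Quotient G V) = Quotient.mk _ b then r else 0 := by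
  split_ifs with hab
  · obtain ⟨g₀, rfl⟩ := Quotient.exact hab
    refine (finsum_eq_single _ g₀ fun g hg => if_neg fun h => hg ?_).trans (if_pos rfl)
    exact IsCancelSMul.smul_left_injective b h.symm
  · exact finsum_eq_zero_of_forall_eq_zero fun g =>
      if_neg fun h => hab (Quotient.sound ⟨g, h.symm⟩)

theorem finsum_quotient_eq_finsum {M : Type*} [AddCommMonoid M] {f : V → M}
    (hf : f.HasFiniteSupport)
    {F : orbitRel.Quotient G V → M} (hF : ∀ y, F (Quotient.mk _ y) = ∑ᶠ g : G, f (g • y)) :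
    ∑ᶠ c, F c = ∑ᶠ x, f x := by
  let e := selfEquivOrbitsQuotientProd (G := G) (X := V) IsCancelSMul.stabilizer_eq_bot
  rw [← finsum_comp_equiv e.symm, finsum_curry _ (hf.fun_comp_of_injective e.symm.injective)]
  exact finsum_congr fun c => by rw [← Quotient.out_eq c, hF, Quotient.out_eq]; rfl

theorem finsum_smul_finsum_mul_eq {R : Type*} [Semiring R] {K p : V → V → R}
    {KQ pQ : orbitRel.Quotient G V → orbitRel.Quotient G V → R}
    (hK : ∀ x, (K x).HasFiniteSupport) (hp : ∀ x, (p x).HasFiniteSupport)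
    (hKQ : ∀ x y, KQ (Quotient.mk _ x) (Quotient.mk _ y) = ∑ᶠ g : G, K x (g • y))
    (hpQ : ∀ x y, pQ (Quotient.mk _ x) (Quotient.mk _ y) = ∑ᶠ g : G, p x (g • y)) (a b : V) :
    ∑ᶠ g : G, ∑ᶠ z, K a z * p z (g • b) =
      ∑ᶠ c, KQ (Quotient.mk _ a) c * pQ c (Quotient.mk _ b) := by
  have hS : support (K a) ⊆ (hK a).toFinset := fun z hz => (hK a).mem_toFinset.2 hz
  calc ∑ᶠ g : G, ∑ᶠ z, K a z * p z (g • b)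
      = ∑ z ∈ (hK a).toFinset, ∑ᶠ g : G, K a z * p z (g • b) := by
        rw [sum_finsum_comm _ _ fun z _ => ((hp z).comp_smul_left b).fun_mul_right _]
        refine finsum_congr fun g => finsum_eq_sum_of_support_subset _ ?_
        exact (support_mul_subset_left _ _).trans hS
    _ = ∑ᶠ z, K a z * pQ (Quotient.mk _ z) (Quotient.mk _ b) := by
        rw [finsum_eq_sum_of_support_subset _ ((support_mul_subset_left _ _).trans hS)]
        exact Finset.sum_congr rfl fun z _ => by
          rw [hpQ, mul_finsum' _ _ ((hp z).comp_smul_left b)]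
    _ = ∑ᶠ c, KQ (Quotient.mk _ a) c * pQ c (Quotient.mk _ b) := by
        refine (finsum_quotient_eq_finsum ((hK a).fun_mul_left _) fun y => ?_).symm
        rw [hKQ, finsum_mul' _ _ ((hK a).comp_smul_left y)]
        simp only [orbitRel.Quotient.quotient_smul_eq]

theorem IsKernelPow.quotient_mk {R : Type*} [Semiring R] [DecidableEq V]
    [DecidableEq (orbitRel.Quotient G V)]
    {K : V → V → R} {KQ : orbitRel.Quotient G V → orbitRel.Quotient G V → R}
    (hK : ∀ x, (K x).HasFiniteSupport)
    (hKQ : ∀ x y, KQ (Quotient.mk _ x) (Quotient.mk _ y) = ∑ᶠ g : G, K x (g • y))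
    {p : ℕ → V → V → R} {pQ : ℕ → orbitRel.Quotient G V → orbitRel.Quotient G V → R}
    (hp : IsKernelPow K p) (hpQ : IsKernelPow KQ pQ) (n : ℕ) (x y : V) :
    pQ n (Quotient.mk _ x) (Quotient.mk _ y) = ∑ᶠ g : G, p n x (g • y) := by
  induction n generalizing x y with
  | zero => simp only [hp.zero, hpQ.zero, finsum_ite_smul_eq]
  | succ n ih =>
    simp only [hp.succ, hpQ.succ]
    exact (finsum_smul_finsum_mul_eq hK (hp.hasFiniteSupport hK n) hKQ ih x y).symm

theorem transitionKernel_quotient_mk {R : Type*} [DivisionRing R] [DecidableEq V]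
    [DecidableEq (orbitRel.Quotient G V)]
    {m : V → R} {w : V → V → R} (hw : ∀ x, (w x).HasFiniteSupport)
    {mQ : orbitRel.Quotient G V → R} {wQ : orbitRel.Quotient G V → orbitRel.Quotient G V → R}
    (hmQ : ∀ x, mQ (Quotient.mk _ x) = m x)
    (hwQ : ∀ x y, wQ (Quotient.mk _ x) (Quotient.mk _ y) = ∑ᶠ g : G, w x (g • y)) (x y : V) :
    transitionKernel mQ wQ (Quotient.mk _ x) (Quotient.mk _ y) =
      ∑ᶠ g : G, transitionKernel m w x (g • y) := by
  have hdeg : ∑ᶠ u, wQ (Quotient.mk _ x) u = ∑ᶠ u, w x u :=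
    finsum_quotient_eq_finsum (hw x) (hwQ x)
  have hdiag : (fun z : V => if x = z then (1 : R) else 0).HasFiniteSupport :=
    (Set.finite_singleton x).subset fun z hz => of_not_not fun h => hz (if_neg (Ne.symm h))
  unfold transitionKernel
  simp only [div_eq_mul_inv]
  rw [finsum_add_distrib ((hdiag.comp_smul_left y).fun_mul_right _)
      (((hw x).comp_smul_left y).fun_mul_left _),
    ← mul_finsum, ← finsum_mul, finsum_ite_smul_eq, hmQ, hdeg, hwQ]

end FreeAction

open scoped Classical

theorem quotient_graph_heat_kernel_general
    {V : Type*} [DecidableEq V] {G : Type*} [Group G] [MulAction G V]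
    (m : V → ℝ)
    (w : V → V → ℝ)
    (hlf : ∀ x, {y | w x y ≠ 0}.Finite)
    (hGm : ∀ (g : G) (x : V), m (g • x) = m x)
    (hfree : ∀ (g : G) (x : V), g • x = x → g = 1)
    (mQ : Quotient (MulAction.orbitRel G V) → ℝ)
    (hmQ : ∀ x : V, mQ (Quotient.mk (MulAction.orbitRel G V) x) = m x)
    (wQ : Quotient (MulAction.orbitRel G V) → Quotient (MulAction.orbitRel G V) → ℝ)
    (hwQ : ∀ x y : V, wQ (Quotient.mk (MulAction.orbitRel G V) x)
        (Quotient.mk (MulAction.orbitRel G V) y) = ∑ᶠ g : G, w x (g • y))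
    (pG : ℕ → V → V → ℝ)
    (hpG0 : ∀ x y : V, pG 0 x y = if x = y then 1 else 0)
    (hpGrec : ∀ (n : ℕ) (x y : V),
      pG (n + 1) x y = ∑ᶠ z,
        ((1 - (1 / m x) * ∑ᶠ u, w x u) * (if x = z then 1 else 0) + w x z / m x) *
          pG n z y)
    (pQ : ℕ → Quotient (MulAction.orbitRel G V) → Quotient (MulAction.orbitRel G V) → ℝ)
    (hpQ0 : ∀ a b, pQ 0 a b = if a = b then 1 else 0)
    (hpQrec : ∀ (n : ℕ) (a b : Quotient (MulAction.orbitRel G V)),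
      pQ (n + 1) a b = ∑ᶠ c,
        ((1 - (1 / mQ a) * ∑ᶠ u, wQ a u) * (if a = c then 1 else 0) + wQ a c / mQ a) *
          pQ n c b)
    (n : ℕ) (x y : V) :
    pQ n (Quotient.mk (MulAction.orbitRel G V) x) (Quotient.mk (MulAction.orbitRel G V) y)
        = ∑ᶠ g : G, pG n x (g • y) ∧
    pQ n (Quotient.mk (MulAction.orbitRel G V) x) (Quotient.mk (MulAction.orbitRel G V) y)
        / mQ (Quotient.mk (MulAction.orbitRel G V) y)
        = ∑ᶠ g : G, pG n x (g • y) / m (g • y) := by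
  have : IsCancelSMul G V := isCancelSMul_iff_eq_one_of_smul_eq.mpr hfree
  have hp : ∀ x y, pQ n (Quotient.mk _ x) (Quotient.mk _ y) = ∑ᶠ g : G, pG n x (g • y) :=
    IsKernelPow.quotient_mk (hasFiniteSupport_transitionKernel hlf)
      (transitionKernel_quotient_mk hlf hmQ hwQ)
      ⟨hpG0, hpGrec⟩ ⟨hpQ0, hpQrec⟩ n
  refine ⟨hp x y, ?_⟩
  simp only [hp, hmQ, hGm, div_eq_mul_inv, finsum_mul]

/-- Transition functions and heat kernels of a quotient weighted graph `Q = G/Γ` for a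
free action of `Γ`: `p_n^Q([x],[y]) = ∑_{g∈Γ} p_n^G(x, g·y)` and
`q_n^Q([x],[y]) = ∑_{g∈Γ} q_n^G(x, g·y)` (with `q_n = p_n/m`). -/
theorem quotient_graph_heat_kernel
    {V : Type*} [DecidableEq V] {G : Type*} [Group G] [MulAction G V]
    (m : V → ℝ) (hm : ∀ x, 0 < m x)
    (w : V → V → ℝ) (hsym : ∀ x y, w x y = w y x) (hpos : ∀ x y, 0 ≤ w x y)
    (hloop : ∀ x, w x x = 0)
    (hlf : ∀ x, {y | w x y ≠ 0}.Finite)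
    (hGm : ∀ (g : G) (x : V), m (g • x) = m x)
    (hGw : ∀ (g : G) (x y : V), w (g • x) (g • y) = w x y)
    (hfree : ∀ (g : G) (x : V), g • x = x → g = 1)
    (mQ : Quotient (MulAction.orbitRel G V) → ℝ)
    (hmQ : ∀ x : V, mQ (Quotient.mk (MulAction.orbitRel G V) x) = m x)
    (wQ : Quotient (MulAction.orbitRel G V) → Quotient (MulAction.orbitRel G V) → ℝ)
    (hwQ : ∀ x y : V, wQ (Quotient.mk (MulAction.orbitRel G V) x)
        (Quotient.mk (MulAction.orbitRel G V) y) = ∑ᶠ g : G, w x (g • y))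
    (pG : ℕ → V → V → ℝ)
    (hpG0 : ∀ x y : V, pG 0 x y = if x = y then 1 else 0)
    (hpGrec : ∀ (n : ℕ) (x y : V),
      pG (n + 1) x y = ∑ᶠ z,
        ((1 - (1 / m x) * ∑ᶠ u, w x u) * (if x = z then 1 else 0) + w x z / m x) *
          pG n z y)
    (pQ : ℕ → Quotient (MulAction.orbitRel G V) → Quotient (MulAction.orbitRel G V) → ℝ)
    (hpQ0 : ∀ a b, pQ 0 a b = if a = b then 1 else 0)
    (hpQrec : ∀ (n : ℕ) (a b : Quotient (MulAction.orbitRel G V)),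
      pQ (n + 1) a b = ∑ᶠ c,
        ((1 - (1 / mQ a) * ∑ᶠ u, wQ a u) * (if a = c then 1 else 0) + wQ a c / mQ a) *
          pQ n c b)
    (n : ℕ) (hn : 1 ≤ n) (x y : V) :
    pQ n (Quotient.mk (MulAction.orbitRel G V) x) (Quotient.mk (MulAction.orbitRel G V) y)
        = ∑ᶠ g : G, pG n x (g • y) ∧
    pQ n (Quotient.mk (MulAction.orbitRel G V) x) (Quotient.mk (MulAction.orbitRel G V) y)
        / mQ (Quotient.mk (MulAction.orbitRel G V) y)
        = ∑ᶠ g : G, pG n x (g • y) / m (g • y) :=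
  quotient_graph_heat_kernel_general m w hlf hGm hfree mQ hmQ wQ hwQ pG hpG0 hpGrec pQ hpQ0 hpQrec n
    x y
end

section
/- Let A be a nonsingular d×d integer matrix and T_A = ℤ^d/Aℤ^d the weighted discrete torus with edge weights w_i > 0 and σ = 2∑w_i. Then for any n ≥ 1, the on-diagonal heat kernel satisfies q_n^{T_A}([x],[x]) = σ^{−(n+1)} ∑_{g ∈ Aℤ^d} ∑_{z ∈ 𝒫((n−|g|)/2,d)} n!/((abs(g)+z)!·z!)·w^{abs(g)+2z}, independent of [x]. -/
open scoped Real BigOperators Classical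

/-!
With `L = ∑ᵢ wᵢ (X^{eᵢ} + X^{-eᵢ})` in the group algebra `ℝ[Γ]`, the recursion says that
`σ^{n+1} qₙ(a, b)` is the coefficient of `X^{b-a}` in `Lⁿ`: since `σ = 2 ∑ᵢ wᵢ`, the term
`-2 qₙ(a, b)` cancels `qₙ(a, b)`. For `Γ = T_A`, `L` is the image of its `ℤ^d` counterpart under
the quotient map, so the diagonal coefficient is the sum of the coefficients of `Lⁿ` on `ℤ^d`
over `Aℤ^d`, which `v ↦ A v` parametrises injectively. By the multinomial theorem, the coefficient
of `X^g` in `Lⁿ` on `ℤ^d` counts walks with `kᵢ⁺` steps `+eᵢ` and `kᵢ⁻` steps `-eᵢ`, where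
`kᵢ⁺ - kᵢ⁻ = gᵢ`; that is, `kᵢ^± = gᵢ^± + zᵢ` for some `z ∈ ℕ^d`.
-/

open AddMonoidAlgebra Finset Nat

noncomputable def cayleyAdj {R Γ ι : Type*} [CommSemiring R] [AddGroup Γ] [Fintype ι]
    (w : ι → R) (e : ι → Γ) : AddMonoidAlgebra R Γ :=
  ∑ i, (single (e i) (w i) + single (-e i) (w i))

section CayleyGraph

variable {R Γ Γ' ι : Type*} [CommSemiring R] [Fintype ι] [AddGroup Γ] [AddGroup Γ']

lemma coeff_mul_cayleyAdj (x : AddMonoidAlgebra R Γ) (w : ι → R) (e : ι → Γ) (t : Γ) :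
    (x * cayleyAdj w e).coeff t = ∑ i, w i * (x.coeff (t - e i) + x.coeff (t + e i)) := by
  simp [cayleyAdj, mul_sum, mul_add, sub_eq_add_neg, mul_comm]

lemma mapDomainRingHom_cayleyAdj (f : Γ →+ Γ') (w : ι → R) (e : ι → Γ) :
    mapDomainRingHom R f (cayleyAdj w e) = cayleyAdj w (fun i => f (e i)) := by
  simp [cayleyAdj, mapDomain_add, mapDomain_single]

lemma cayleyAdj_eq_sum_sum (w : ι → R) (e : ι → Γ) :
    cayleyAdj w e = ∑ j : ι ⊕ ι, single (Sum.elim e (-e) j) (Sum.elim w w j) := by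
  simp [cayleyAdj, Fintype.sum_sum_type, sum_add_distrib]

end CayleyGraph

theorem heatKernel_eq_coeff_cayleyAdj_pow {K Γ ι : Type*} [Field K] [AddCommGroup Γ] [Fintype ι]
    (w : ι → K) (e : ι → Γ) (q : ℕ → Γ → Γ → K)
    (hq0 : ∀ a b, q 0 a b = (if a = b then 1 else 0) / (2 * ∑ i, w i))
    (hqrec : ∀ n a b, q (n + 1) a b - q n a b = (1 / (2 * ∑ i, w i)) *
      ∑ i, w i * (q n (a + e i) b + q n (a - e i) b - 2 * q n a b))
    (n : ℕ) (a b : Γ) :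
    q n a b = (1 / (2 * ∑ i, w i)) ^ (n + 1) * (cayleyAdj w e ^ n).coeff (b - a) := by
  set σ := 2 * ∑ i, w i with hσ
  set c := 1 / σ
  induction n generalizing a with
  | zero => simp [c, hq0, one_def, Finsupp.single_apply, sub_eq_zero, eq_comm, div_eq_inv_mul]
  | succ n ih =>
    set W := (cayleyAdj w e ^ n).coeff
    have hstep := hqrec n a b
    simp only [ih] at hstep
    have hsum : ∑ i, w i * (c ^ (n + 1) * W (b - (a + e i)) + c ^ (n + 1) * W (b - (a - e i))
        - 2 * (c ^ (n + 1) * W (b - a))) =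
        c ^ (n + 1) * ((cayleyAdj w e ^ (n + 1)).coeff (b - a) - σ * W (b - a)) := by
      rw [pow_succ (cayleyAdj w e), coeff_mul_cayleyAdj, hσ, mul_assoc, sum_mul, mul_sum,
        ← sum_sub_distrib, mul_sum]
      refine sum_congr rfl fun i _ => ?_
      rw [show b - (a + e i) = b - a - e i by abel, show b - (a - e i) = b - a + e i by abel]
      ring
    -- `c * σ = 1` unless `σ = 0`, and then `c = 1 / 0 = 0`.
    have hdeg : c ^ (n + 1) * (1 - c * σ) = 0 := by
      rcases eq_or_ne σ 0 with h | h <;> simp [c, h]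
    rw [hsum] at hstep
    linear_combination hstep + W (b - a) * hdeg

namespace AddMonoidAlgebra

lemma coeff_mapDomain_eq_finsum {R M N : Type*} [Semiring R] (f : M → N)
    (x : AddMonoidAlgebra R M) (t : N) :
    (mapDomain f x).coeff t = ∑ᶠ m ∈ f ⁻¹' {t}, x.coeff m := by
  rw [finsum_mem_eq_sum_filter _ _ x.coeff.hasFiniteSupport]
  simp [mapDomain, Finsupp.mapDomain, Finsupp.sum, Finsupp.single_apply, Finset.sum_filter]

lemma coeff_sum_single_pow {R M κ : Type*} [CommSemiring R] [AddCommMonoid M] [Fintype κ]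
    [DecidableEq κ] [DecidableEq M] (s : κ → M) (c : κ → R) (n : ℕ) (m : M) :
    ((∑ j, single (s j) (c j)) ^ n).coeff m =
      ∑ k ∈ univ.piAntidiag n with ∑ j, k j • s j = m,
        (multinomial univ k : R) * ∏ j, c j ^ k j := by
  simp only [sum_pow_eq_sum_piAntidiag, natCast_def, single_pow, prod_single, single_mul_single,
    zero_add, coeff_sum, coeff_single, Finsupp.coe_finsetSum, Finset.sum_apply,
    Finsupp.single_apply, sum_filter]

end AddMonoidAlgebra

lemma Nat.cast_multinomial {K α : Type*} [Field K] [CharZero K] (s : Finset α) (k : α → ℕ) :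
    (multinomial s k : K) = (∑ i ∈ s, k i)! / ∏ i ∈ s, ((k i)! : K) := by
  rw [eq_div_iff (prod_ne_zero_iff.2 fun i _ => cast_ne_zero.2 (factorial_ne_zero _)), mul_comm]
  exact_mod_cast multinomial_spec s k

section Lattice

variable {ι : Type*} [Fintype ι]

lemma sum_smul_elim_single_neg_single [DecidableEq ι] (k : ι ⊕ ι → ℕ) :
    ∑ j, k j • Sum.elim (fun i => Pi.single i (1 : ℤ)) (-fun i => Pi.single i 1) j =
      fun i => (k (.inl i) : ℤ) - k (.inr i) := by
  ext i
  simp [Fintype.sum_sum_type, Finset.sum_apply, Pi.single_apply, sub_eq_add_neg]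

def stepCounts (g : ι → ℤ) (z : ι → ℕ) : ι ⊕ ι → ℕ :=
  Sum.elim (fun i => (g i).toNat + z i) (fun i => (-g i).toNat + z i)

lemma sum_stepCounts (g : ι → ℤ) (z : ι → ℕ) :
    ∑ j, stepCounts g z j = ∑ i, (g i).natAbs + 2 * ∑ i, z i := by
  simp only [stepCounts, Fintype.sum_sum_type, Sum.elim_inl, Sum.elim_inr, mul_sum,
    ← sum_add_distrib]
  exact sum_congr rfl fun i _ => by omega

lemma prod_factorial_stepCounts (g : ι → ℤ) (z : ι → ℕ) :
    ∏ j, (stepCounts g z j)! = (∏ i, ((g i).natAbs + z i)!) * ∏ i, (z i)! := by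
  simp only [stepCounts, Fintype.prod_sum_type, Sum.elim_inl, Sum.elim_inr, ← prod_mul_distrib]
  refine prod_congr rfl fun i _ => ?_
  rcases le_total 0 (g i) with h | h
  · rw [show (-g i).toNat = 0 by omega, show (g i).toNat = (g i).natAbs by omega, zero_add]
  · rw [show (g i).toNat = 0 by omega, show (-g i).toNat = (g i).natAbs by omega, zero_add,
      mul_comm]

lemma prod_pow_stepCounts {M : Type*} [CommMonoid M] (w : ι → M) (g : ι → ℤ) (z : ι → ℕ) :
    ∏ j, Sum.elim w w j ^ stepCounts g z j = ∏ i, w i ^ ((g i).natAbs + 2 * z i) := by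
  simp only [stepCounts, Fintype.prod_sum_type, Sum.elim_inl, Sum.elim_inr, ← prod_mul_distrib,
    ← pow_add]
  exact prod_congr rfl fun i _ => congrArg _ (by omega)

lemma bijOn_stepCounts [DecidableEq ι] (g : ι → ℤ) (n : ℕ) :
    Set.BijOn (stepCounts g) {z | ∑ i, (g i).natAbs + 2 * ∑ i, z i = n}
      ↑({k ∈ univ.piAntidiag n | ∑ j, k j • Sum.elim (fun i => Pi.single i (1 : ℤ))
        (-fun i => Pi.single i 1) j = g} : Finset (ι ⊕ ι → ℕ)) := by
  refine ⟨fun z hz => ?_, fun z _ z' _ h => ?_, fun k hk => ?_⟩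
  · simp only [coe_filter, mem_piAntidiag, sum_smul_elim_single_neg_single, Set.mem_ofPred_eq]
    refine ⟨⟨?_, by simp⟩, ?_⟩
    · rw [sum_stepCounts]; exact hz
    · ext i; simp [stepCounts]
  · ext i
    have := congrFun h (.inr i)
    simp only [stepCounts, Sum.elim_inr] at this
    omega
  · simp only [coe_filter, mem_piAntidiag, sum_smul_elim_single_neg_single, Set.mem_ofPred_eq,
      funext_iff] at hk
    obtain ⟨⟨hsum, -⟩, hg⟩ := hk
    have hk : stepCounts g (fun i => min (k (.inl i)) (k (.inr i))) = k := by
      ext (i | i) <;> simp only [stepCounts, Sum.elim_inl, Sum.elim_inr] <;> have := hg i <;> omega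
    refine ⟨_, ?_, hk⟩
    rw [Set.mem_ofPred_eq, ← sum_stepCounts, hk, hsum]

theorem coeff_cayleyAdj_single_pow {K : Type*} [Field K] [CharZero K] [DecidableEq ι]
    (w : ι → K) (n : ℕ) (g : ι → ℤ) :
    (cayleyAdj w (fun i => Pi.single i (1 : ℤ)) ^ n).coeff g =
      ∑ᶠ z : ι → ℕ, if ∑ i, (g i).natAbs + 2 * ∑ i, z i = n then
        (Nat.factorial n : K) /
            ((∏ i, Nat.factorial ((g i).natAbs + z i)) * ∏ i, Nat.factorial (z i)) *
          ∏ i, w i ^ ((g i).natAbs + 2 * z i)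
      else 0 := by
  rw [cayleyAdj_eq_sum_sum, coeff_sum_single_pow, ← finsum_mem_coe_finset]
  simp_rw [← finsum_eq_if]
  symm
  refine finsum_mem_eq_of_bijOn _ (bijOn_stepCounts g n) fun z hz => ?_
  rw [cast_multinomial, ← Nat.cast_prod, prod_factorial_stepCounts, prod_pow_stepCounts,
    sum_stepCounts, show _ = n from hz, Nat.cast_mul]

end Lattice

theorem torus_heat_kernel_diagonal_general
    (d : ℕ) (A : Matrix (Fin d) (Fin d) ℤ) (hA : A.det ≠ 0)
    (wi : Fin d → ℝ)
    (q : ℕ → ((Fin d → ℤ) ⧸ LinearMap.range (Matrix.mulVecLin A)) →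
      ((Fin d → ℤ) ⧸ LinearMap.range (Matrix.mulVecLin A)) → ℝ)
    (hq0 : ∀ a b, q 0 a b = (if a = b then 1 else 0) / (2 * ∑ i, wi i))
    (hqrec : ∀ (n : ℕ) (a b : (Fin d → ℤ) ⧸ LinearMap.range (Matrix.mulVecLin A)),
      q (n + 1) a b - q n a b = (1 / (2 * ∑ i, wi i)) *
        ∑ i, wi i * (q n (a + Submodule.Quotient.mk (Pi.single i 1)) b +
          q n (a - Submodule.Quotient.mk (Pi.single i 1)) b - 2 * q n a b))
    (n : ℕ)
    (a : (Fin d → ℤ) ⧸ LinearMap.range (Matrix.mulVecLin A)) :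
    q n a a = (1 / (2 * ∑ i, wi i)) ^ (n + 1) *
      ∑ᶠ v : Fin d → ℤ, ∑ᶠ z : Fin d → ℕ,
        if (∑ i, ((A.mulVec v) i).natAbs) + 2 * ∑ i, z i = n then
          (Nat.factorial n : ℝ) /
            ((∏ i, Nat.factorial (((A.mulVec v) i).natAbs + z i)) *
              ∏ i, Nat.factorial (z i)) *
          ∏ i, wi i ^ (((A.mulVec v) i).natAbs + 2 * z i)
        else 0 := by
  rw [heatKernel_eq_coeff_cayleyAdj_pow wi _ q hq0 hqrec, sub_self]
  congr 1
  let p := (LinearMap.range A.mulVecLin).mkQ.toAddMonoidHom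
  have hfiber : p ⁻¹' {0} = Set.range A.mulVec := by
    ext g
    simp [p, Submodule.Quotient.mk_eq_zero]
  rw [show (fun i => Submodule.Quotient.mk (Pi.single i 1)) = fun i => p (Pi.single i 1) from rfl,
    ← mapDomainRingHom_cayleyAdj, ← map_pow, mapDomainRingHom_apply, coeff_mapDomain_eq_finsum,
    hfiber, finsum_mem_range (Matrix.mulVec_injective_of_det_ne_zero hA)]
  exact finsum_congr fun v => coeff_cayleyAdj_single_pow wi n _

/-- On-diagonal heat kernel of the weighted discrete torus `T_A = ℤ^d/Aℤ^d`:
`q_n([x],[x]) = σ^{-(n+1)} ∑_{g∈Aℤ^d} ∑_{z ∈ 𝒫((n-|g|)/2,d)} n!/((abs(g)+z)! z!) w^{abs(g)+2z}`,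
independent of `[x]`.  The sum over `g ∈ Aℤ^d` is parametrized by `g = A v`, `v ∈ ℤ^d`,
and the quotient Laplacian is used in the heat-kernel recursion. -/
theorem torus_heat_kernel_diagonal
    (d : ℕ) (A : Matrix (Fin d) (Fin d) ℤ) (hA : A.det ≠ 0)
    (wi : Fin d → ℝ) (hw : ∀ i, 0 < wi i)
    (q : ℕ → ((Fin d → ℤ) ⧸ LinearMap.range (Matrix.mulVecLin A)) →
      ((Fin d → ℤ) ⧸ LinearMap.range (Matrix.mulVecLin A)) → ℝ)
    (hq0 : ∀ a b, q 0 a b = (if a = b then 1 else 0) / (2 * ∑ i, wi i))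
    (hqrec : ∀ (n : ℕ) (a b : (Fin d → ℤ) ⧸ LinearMap.range (Matrix.mulVecLin A)),
      q (n + 1) a b - q n a b = (1 / (2 * ∑ i, wi i)) *
        ∑ i, wi i * (q n (a + Submodule.Quotient.mk (Pi.single i 1)) b +
          q n (a - Submodule.Quotient.mk (Pi.single i 1)) b - 2 * q n a b))
    (n : ℕ) (hn : 1 ≤ n)
    (a : (Fin d → ℤ) ⧸ LinearMap.range (Matrix.mulVecLin A)) :
    q n a a = (1 / (2 * ∑ i, wi i)) ^ (n + 1) *
      ∑ᶠ v : Fin d → ℤ, ∑ᶠ z : Fin d → ℕ,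
        if (∑ i, ((A.mulVec v) i).natAbs) + 2 * ∑ i, z i = n then
          (Nat.factorial n : ℝ) /
            ((∏ i, Nat.factorial (((A.mulVec v) i).natAbs + z i)) *
              ∏ i, Nat.factorial (z i)) *
          ∏ i, wi i ^ (((A.mulVec v) i).natAbs + 2 * z i)
        else 0 :=
  torus_heat_kernel_diagonal_general d A hA wi q hq0 hqrec n a
end
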